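/- arXiv:1309.4396 — 4 statements merged into one kernel-verified Lean document; each statement's English description precedes it below -/
import Mathlib

section
/- The complexity of an expanded route ρ_E on the expanded graph G_E is not smaller than the complexity of the route ρ = E^{-1}(ρ_E) on the road network G_R. -/
/-- A road network: a directed graph on node type `V` together with a set of
roads `R`, a membership relation `onRoad`, a unique road `roadOf x y` for each
edge `(x, y)`, a positive length `len` on edges, and a turn-cost function
`turn` with values in `[0,1]` that vanishes when staying on the same road. -/
structure RoadNetwork (V R : Type) where
  edge : V → V → Prop
  onRoad : V → R → Prop
  roadOf : V → V → R
  len : V → V → ℝ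
  turn : V → R → R → ℝ
  onRoad_nonempty : ∀ n : V, ∃ r : R, onRoad n r
  len_pos : ∀ ⦃x y : V⦄, edge x y → 0 < len x y
  turn_nonneg : ∀ (n : V) (r₁ r₂ : R), onRoad n r₁ → onRoad n r₂ → 0 ≤ turn n r₁ r₂
  turn_le_one : ∀ (n : V) (r₁ r₂ : R), onRoad n r₁ → onRoad n r₂ → turn n r₁ r₂ ≤ 1
  turn_self : ∀ (n : V) (r : R), turn n r r = 0
  edge_onRoad_left : ∀ ⦃x y : V⦄, edge x y → onRoad x (roadOf x y)
  edge_onRoad_right : ∀ ⦃x y : V⦄, edge x y → onRoad y (roadOf x y)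

namespace RoadNetwork

variable {V R : Type}

/-- A route is a nonempty sequence of nodes every consecutive pair of which is an edge. -/
def IsRoute (N : RoadNetwork V R) (ρ : List V) : Prop :=
  ρ ≠ [] ∧ ρ.Chain' N.edge

/-- The length of a route: the sum of the lengths of its edges. -/
def routeLen (N : RoadNetwork V R) (ρ : List V) : ℝ :=
  ((ρ.zip ρ.tail).map fun p => N.len p.1 p.2).sum

/-- The complexity of a route: the sum of the turn costs at its internal nodes. -/
def routeCpl (N : RoadNetwork V R) (ρ : List V) : ℝ :=
  ((ρ.zip (ρ.tail.zip ρ.tail.tail)).map fun p =>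
    N.turn p.2.1 (N.roadOf p.1 p.2.1) (N.roadOf p.2.1 p.2.2)).sum

/-- A route from `a` to `b`. -/
def RouteFromTo (N : RoadNetwork V R) (ρ : List V) (a b : V) : Prop :=
  N.IsRoute ρ ∧ ρ.head? = some a ∧ ρ.getLast? = some b

/-- Edges of the expanded graph: from `(n_x, r_i)` to `(n_y, r_j)` whenever
`r_i, r_j ∈ R(n_x)` and `(n_x, n_y)` is an edge lying on road `r_j`. -/
def expEdge (N : RoadNetwork V R) (a b : V × R) : Prop :=
  N.onRoad a.1 a.2 ∧ N.onRoad a.1 b.2 ∧ N.edge a.1 b.1 ∧ N.roadOf a.1 b.1 = b.2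

/-- An expanded route: a nonempty path in the expanded graph. -/
def IsExpRoute (N : RoadNetwork V R) (σ : List (V × R)) : Prop :=
  σ ≠ [] ∧ σ.Chain' N.expEdge ∧ ∀ a ∈ σ, N.onRoad a.1 a.2

/-- The length of an expanded route: the sum of the lengths of its edges. -/
def expLen (N : RoadNetwork V R) (σ : List (V × R)) : ℝ :=
  ((σ.zip σ.tail).map fun p => N.len p.1.1 p.2.1).sum

/-- The complexity of an expanded route: the sum of the turn costs
`C(n_x, r_i, r_j)` over its edges `((n_x, r_i), (n_y, r_j))`. -/
def expCpl (N : RoadNetwork V R) (σ : List (V × R)) : ℝ :=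
  ((σ.zip σ.tail).map fun p => N.turn p.1.1 p.1.2 p.2.2).sum

/-- An expanded route from `a` to `b`. -/
def ExpRouteFromTo (N : RoadNetwork V R) (σ : List (V × R)) (a b : V × R) : Prop :=
  N.IsExpRoute σ ∧ σ.head? = some a ∧ σ.getLast? = some b

/-- `σ ∈ E(ρ)`: the expanded routes associated with route `ρ`; the `k`-th
expanded node (for `k > 1`) is `(n_k, R(n_{k-1}, n_k))`, while the first is
`(n_1, r)` for an arbitrary road `r ∈ R(n_1)`. -/
def InExpansion (N : RoadNetwork V R) (ρ : List V) (σ : List (V × R)) : Prop :=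
  σ.map Prod.fst = ρ ∧ (∀ a ∈ σ, N.onRoad a.1 a.2) ∧
  ∀ (k : ℕ) (h : k + 1 < σ.length),
    (σ.get ⟨k + 1, h⟩).2 =
      N.roadOf (σ.get ⟨k, Nat.lt_of_succ_lt h⟩).1 (σ.get ⟨k + 1, h⟩).1

/-- The special expanded route `ρ_E* ∈ E(ρ)`: its first expanded node is
`(n_1, R(n_1, n_2))`. -/
def IsSpecialExpansion (N : RoadNetwork V R) (ρ : List V) (σ : List (V × R)) : Prop :=
  N.InExpansion ρ σ ∧
  ∀ (h : 1 < σ.length),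
    (σ.get ⟨0, Nat.lt_of_succ_lt h⟩).2 =
      N.roadOf (σ.get ⟨0, Nat.lt_of_succ_lt h⟩).1 (σ.get ⟨1, h⟩).1

end RoadNetwork

/-- `(c₁, l₁) <_FS (c₂, l₂)`: FS-shorter, i.e. lower complexity, or equal
complexity and smaller length. -/
def FSshorter (c₁ l₁ c₂ l₂ : ℝ) : Prop := c₁ < c₂ ∨ (c₁ = c₂ ∧ l₁ < l₂)

lemma routeCpl_cons_cons_cons {V R : Type} (N : RoadNetwork V R) (x y z : V) (l : List V) :
    N.routeCpl (x :: y :: z :: l) =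
      N.turn y (N.roadOf x y) (N.roadOf y z) + N.routeCpl (y :: z :: l) := by
  simp [RoadNetwork.routeCpl]

lemma expCpl_cons_cons {V R : Type} (N : RoadNetwork V R) (a b : V × R) (l : List (V × R)) :
    N.expCpl (a :: b :: l) = N.turn a.1 a.2 b.2 + N.expCpl (b :: l) := by
  simp [RoadNetwork.expCpl]

lemma key {V R : Type} (N : RoadNetwork V R) :
    ∀ (l : List (V × R)) (a b : V × R), (a :: b :: l).Chain' N.expEdge →
      N.routeCpl ((a :: b :: l).map Prod.fst) = N.expCpl (b :: l) := by
  intro l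
  induction l with
  | nil => intro a b _; simp [RoadNetwork.routeCpl, RoadNetwork.expCpl]
  | cons c l ih =>
      intro a b h
      have hab : N.expEdge a b := (List.isChain_cons_cons.mp h).1
      have hbc : N.expEdge b c := (List.isChain_cons_cons.mp (List.isChain_cons_cons.mp h).2).1
      have htail : (b :: c :: l).Chain' N.expEdge := (List.isChain_cons_cons.mp h).2
      have := ih b c htail
      simp only [List.map_cons] at this ⊢
      rw [routeCpl_cons_cons_cons, expCpl_cons_cons, this, hab.2.2.2, hbc.2.2.2]

/-- **Lemma 3, second part.** The complexity of an expanded route `σ` is not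
smaller than the complexity of the projected route `E⁻¹(σ) = σ.map Prod.fst`. -/
theorem projected_complexity_le_expanded_complexity {V R : Type} [Fintype V] [Fintype R]
    (N : RoadNetwork V R) (σ : List (V × R)) (hσ : N.IsExpRoute σ) :
    N.routeCpl (σ.map Prod.fst) ≤ N.expCpl σ := by
  obtain ⟨hne, hchain, honroad⟩ := hσ
  match σ with
  | [] => simp at hne
  | [a] => simp [RoadNetwork.routeCpl, RoadNetwork.expCpl]
  | a :: b :: l =>
      rw [key N l a b hchain, expCpl_cons_cons]
      have hab : N.expEdge a b := (List.isChain_cons_cons.mp hchain).1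
      have : 0 ≤ N.turn a.1 a.2 b.2 := N.turn_nonneg a.1 a.2 b.2 hab.1 hab.2.1
      linarith
end

section
/- Let ρ^FS be a fastest simplest route on the road network G_R from node n_s to node n_t, and let ρ_E^{FS*} denote its special expanded route. Then there exists no expanded route that starts from (n_s, r_i) and ends at (n_t, r_j), for any r_i ∈ R(n_s) and any r_j ∈ R(n_t), that is FS-shorter than ρ_E^{FS*}. -/
namespace RoadNetwork

variable {V R : Type}

/-- A simplest route from `a` to `b`: a route of minimum complexity. -/
def IsSimplest (N : RoadNetwork V R) (ρ : List V) (a b : V) : Prop :=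
  N.RouteFromTo ρ a b ∧ ∀ ρ' : List V, N.RouteFromTo ρ' a b → N.routeCpl ρ ≤ N.routeCpl ρ'

/-- A fastest simplest route from `a` to `b`: of minimum length among the simplest routes. -/
def IsFastestSimplest (N : RoadNetwork V R) (ρ : List V) (a b : V) : Prop :=
  N.IsSimplest ρ a b ∧ ∀ ρ' : List V, N.IsSimplest ρ' a b → N.routeLen ρ ≤ N.routeLen ρ'

end RoadNetwork

/-!
Projecting an expanded route onto its nodes gives a route of the same length whose complexity
is at most that of the expanded route: the expanded route pays the same turn costs at the
internal nodes plus a nonnegative cost for its first turn. For the special expansion that first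
turn stays on the road of the first edge, so costs nothing and the two complexities agree. An
FS-shorter expanded route would thus project to a route FS-shorter than the fastest simplest one.
-/

namespace RoadNetwork

variable {V R : Type} (N : RoadNetwork V R)

theorem expLen_eq_routeLen_map_fst (σ : List (V × R)) :
    N.expLen σ = N.routeLen (σ.map Prod.fst) := by
  induction σ with
  | nil => rfl
  | cons a l ih =>
    cases l with
    | nil => rfl
    | cons b l =>
      simp only [expLen, routeLen, List.map_cons, List.tail_cons, List.zip_cons_cons,
        List.sum_cons] at ih ⊢
      rw [ih]

theorem expCpl_cons_cons (a b : V × R) (l : List (V × R))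
    (h : (a :: b :: l).IsChain fun x y => y.2 = N.roadOf x.1 y.1) :
    N.expCpl (a :: b :: l) = N.turn a.1 a.2 b.2 + N.routeCpl ((a :: b :: l).map Prod.fst) := by
  induction l generalizing a b with
  | nil => simp [expCpl, routeCpl]
  | cons c l ih =>
    obtain ⟨hab, h'⟩ := List.isChain_cons_cons.mp h
    have hbc : c.2 = N.roadOf b.1 c.1 := (List.isChain_cons_cons.mp h').1
    have hσ : N.expCpl (a :: b :: c :: l) = N.turn a.1 a.2 b.2 + N.expCpl (b :: c :: l) := by
      simp [expCpl]
    have hρ : N.routeCpl ((a :: b :: c :: l).map Prod.fst) =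
        N.turn b.1 (N.roadOf a.1 b.1) (N.roadOf b.1 c.1) +
          N.routeCpl ((b :: c :: l).map Prod.fst) := by
      simp [routeCpl]
    rw [hσ, ih b c h', hρ, ← hab, ← hbc]

theorem routeCpl_map_fst_le_expCpl {σ : List (V × R)} (h : σ.IsChain N.expEdge) :
    N.routeCpl (σ.map Prod.fst) ≤ N.expCpl σ := by
  match σ, h with
  | [], _ => simp [expCpl, routeCpl]
  | [a], _ => simp [expCpl, routeCpl]
  | a :: b :: l, h =>
    have hab : N.expEdge a b := (List.isChain_cons_cons.mp h).1
    rw [N.expCpl_cons_cons a b l (h.imp fun _ _ hxy => hxy.2.2.2.symm)]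
    linarith [N.turn_nonneg _ _ _ hab.1 hab.2.1]

variable {N}

theorem ExpRouteFromTo.routeFromTo_map_fst {σ : List (V × R)} {a b : V × R}
    (h : N.ExpRouteFromTo σ a b) : N.RouteFromTo (σ.map Prod.fst) a.1 b.1 := by
  obtain ⟨⟨hne, hchain, -⟩, hhead, hlast⟩ := h
  refine ⟨⟨by simpa using hne, ?_⟩, ?_, ?_⟩
  · rw [List.Chain', List.isChain_map]
    exact hchain.imp fun _ _ hxy => hxy.2.2.1
  · rw [List.head?_map, hhead]; rfl
  · rw [List.getLast?_map, hlast]; rfl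

theorem InExpansion.isChain_roadOf {ρ : List V} {σ : List (V × R)} (h : N.InExpansion ρ σ) :
    σ.IsChain fun x y => y.2 = N.roadOf x.1 y.1 := by
  rw [List.isChain_iff_getElem]
  intro k hk
  exact h.2.2 k (by omega)

theorem InExpansion.expLen_eq {ρ : List V} {σ : List (V × R)} (h : N.InExpansion ρ σ) :
    N.expLen σ = N.routeLen ρ := by
  rw [expLen_eq_routeLen_map_fst, h.1]

/-- The special expansion starts on the road of its first edge, so its first turn is free. -/
theorem IsSpecialExpansion.expCpl_eq {ρ : List V} {σ : List (V × R)}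
    (h : N.IsSpecialExpansion ρ σ) : N.expCpl σ = N.routeCpl ρ := by
  obtain ⟨hexp, hfirst⟩ := h
  rw [← hexp.1]
  match σ, hexp, hfirst with
  | [], _, _ => simp [expCpl, routeCpl]
  | [a], _, _ => simp [expCpl, routeCpl]
  | a :: b :: l, hexp, hfirst =>
    have h1 : 1 < (a :: b :: l).length := by simp
    have ha : a.2 = N.roadOf a.1 b.1 := hfirst h1
    have hb : b.2 = N.roadOf a.1 b.1 := hexp.2.2 0 h1
    rw [N.expCpl_cons_cons a b l hexp.isChain_roadOf, ha, hb, N.turn_self, zero_add]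

theorem IsFastestSimplest.not_FSshorter {ρ ρ' : List V} {a b : V}
    (hρ : N.IsFastestSimplest ρ a b) (hρ' : N.RouteFromTo ρ' a b) :
    ¬ FSshorter (N.routeCpl ρ') (N.routeLen ρ') (N.routeCpl ρ) (N.routeLen ρ) := by
  obtain ⟨⟨-, hsimplest⟩, hfastest⟩ := hρ
  rintro (hcpl | ⟨hcpl, hlen⟩)
  · linarith [hsimplest ρ' hρ']
  · have hρ'_simplest : N.IsSimplest ρ' a b := ⟨hρ', fun ρ'' h ↦ hcpl ▸ hsimplest ρ'' h⟩
    linarith [hfastest ρ' hρ'_simplest]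

end RoadNetwork

theorem FSshorter.of_le_left {c₁ c₁' l₁ c₂ l₂ : ℝ} (h : FSshorter c₁ l₁ c₂ l₂) (hc : c₁' ≤ c₁) :
    FSshorter c₁' l₁ c₂ l₂ := by
  rcases h with h | ⟨rfl, hl⟩
  · exact Or.inl (hc.trans_lt h)
  · rcases hc.lt_or_eq with hc | rfl
    · exact Or.inl hc
    · exact Or.inr ⟨rfl, hl⟩

theorem no_expanded_route_FSshorter_than_special_of_fastest_simplest_general
    {V R : Type}
    (N : RoadNetwork V R) (ns nt : V) (ρFS : List V) (σ : List (V × R))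
    (hFS : N.IsFastestSimplest ρFS ns nt)
    (hσ : N.IsSpecialExpansion ρFS σ) :
    ¬ ∃ (σ' : List (V × R)) (ri rj : R),
        N.onRoad ns ri ∧ N.onRoad nt rj ∧
        N.ExpRouteFromTo σ' (ns, ri) (nt, rj) ∧
        FSshorter (N.expCpl σ') (N.expLen σ') (N.expCpl σ) (N.expLen σ) := by
  rintro ⟨σ', ri, rj, -, -, hσ', hshorter⟩
  refine hFS.not_FSshorter hσ'.routeFromTo_map_fst ?_
  rw [← hσ.expCpl_eq, ← hσ.1.expLen_eq, ← N.expLen_eq_routeLen_map_fst]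
  exact hshorter.of_le_left (N.routeCpl_map_fst_le_expCpl hσ'.1.2.1)

/-- **Theorem 1.** Let `ρFS` be a fastest simplest route from `n_s` to `n_t`
and `σ` its special expanded route. Then no expanded route from `(n_s, r_i)`
to `(n_t, r_j)`, for any `r_i ∈ R(n_s)` and `r_j ∈ R(n_t)`, is FS-shorter
than `σ`. -/
theorem no_expanded_route_FSshorter_than_special_of_fastest_simplest
    {V R : Type} [Fintype V] [Fintype R]
    (N : RoadNetwork V R) (ns nt : V) (ρFS : List V) (σ : List (V × R))
    (hFS : N.IsFastestSimplest ρFS ns nt)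
    (hσ : N.IsSpecialExpansion ρFS σ) :
    ¬ ∃ (σ' : List (V × R)) (ri rj : R),
        N.onRoad ns ri ∧ N.onRoad nt rj ∧
        N.ExpRouteFromTo σ' (ns, ri) (nt, rj) ∧
        FSshorter (N.expCpl σ') (N.expLen σ') (N.expCpl σ) (N.expLen σ) :=
  no_expanded_route_FSshorter_than_special_of_fastest_simplest_general N ns nt ρFS σ hFS hσ
end

section
/- Let ρ be a route from source n_s to node n_x, and let snfC⁺ be an upper bound on the complexity of a simplest near-fastest route from n_s to the target n_t (i.e., there exists a near-fastest route from n_s to n_t of complexity at most snfC⁺). If C(ρ) + fsC[n_x] > snfC⁺, then every route from n_s to n_t of the form ρσ (the concatenation of ρ with a route σ from n_x to n_t) has complexity greater than snfC⁺; in particular, no extension of ρ towards n_t is a simplest near-fastest route. -/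
/-- A near-fastest route from `a` to `b` (with respect to the fastest-route
lengths `sfL` towards the target): a route of length at most `(1 + ε) * sfL a`. -/
def NearFastest {V R : Type} (N : RoadNetwork V R) (ε : ℝ) (sfL : V → ℝ)
    (ρ : List V) (a b : V) : Prop :=
  N.RouteFromTo ρ a b ∧ N.routeLen ρ ≤ (1 + ε) * sfL a

/-- A simplest near-fastest route from `a` to `b`: a near-fastest route of
minimum complexity among all near-fastest routes from `a` to `b`. -/
def SimplestNearFastest {V R : Type} (N : RoadNetwork V R) (ε : ℝ) (sfL : V → ℝ)
    (ρ : List V) (a b : V) : Prop :=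
  NearFastest N ε sfL ρ a b ∧
  ∀ ρ' : List V, NearFastest N ε sfL ρ' a b → N.routeCpl ρ ≤ N.routeCpl ρ'

section Aux

variable {V R : Type}

lemma routeCpl_nil (N : RoadNetwork V R) : N.routeCpl ([] : List V) = 0 := by
  simp [RoadNetwork.routeCpl]

lemma routeCpl_single (N : RoadNetwork V R) (a : V) : N.routeCpl [a] = 0 := by
  simp [RoadNetwork.routeCpl]

lemma routeCpl_pair (N : RoadNetwork V R) (a b : V) : N.routeCpl [a, b] = 0 := by
  simp [RoadNetwork.routeCpl]

lemma routeCpl_cons₃ (N : RoadNetwork V R) (a b c : V) (l : List V) :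
    N.routeCpl (a :: b :: c :: l) =
      N.turn b (N.roadOf a b) (N.roadOf b c) + N.routeCpl (b :: c :: l) := by
  simp [RoadNetwork.routeCpl]

lemma turn_edge_nonneg (N : RoadNetwork V R) {a b c : V}
    (h₁ : N.edge a b) (h₂ : N.edge b c) :
    0 ≤ N.turn b (N.roadOf a b) (N.roadOf b c) :=
  N.turn_nonneg b _ _ (N.edge_onRoad_right h₁) (N.edge_onRoad_left h₂)

lemma cpl_append (N : RoadNetwork V R) :
    ∀ ρ σ : List V, ρ ≠ [] → σ ≠ [] →
      ρ.Chain' N.edge → σ.Chain' N.edge → ρ.getLast? = σ.head? →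
      N.routeCpl ρ + N.routeCpl σ ≤ N.routeCpl (ρ ++ σ.tail) := by
  intro ρ
  induction ρ with
  | nil => intro σ h; exact absurd rfl h
  | cons a ρ' ih =>
    intro σ _ hσne hchρ hchσ hlast
    cases ρ' with
    | nil =>
      -- ρ = [a]; σ = a :: σ.tail
      obtain ⟨s, σ', rfl⟩ := List.exists_cons_of_ne_nil hσne
      simp at hlast
      subst hlast
      simp [routeCpl_single]
    | cons b ρ'' =>
      obtain ⟨hab, hchρ'⟩ := List.isChain_cons_cons.mp hchρ
      have hlast' : (b :: ρ'').getLast? = σ.head? := by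
        rw [← hlast]; simp [List.getLast?]
      have IH := ih σ (by simp) hσne hchρ' hchσ hlast'
      cases ρ'' with
      | cons c rest =>
        have : (a :: b :: c :: rest) ++ σ.tail = a :: b :: c :: (rest ++ σ.tail) := by simp
        rw [this, routeCpl_cons₃, routeCpl_cons₃]
        have : (b :: c :: rest) ++ σ.tail = b :: c :: (rest ++ σ.tail) := by simp
        rw [this] at IH
        linarith
      | nil =>
        -- ρ = [a, b]; σ = b :: σ.tail
        obtain ⟨s, σ', rfl⟩ := List.exists_cons_of_ne_nil hσne
        simp at hlast'
        subst hlast'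
        cases σ' with
        | nil => simp [routeCpl_pair, routeCpl_single]
        | cons c rest =>
          have : ([a, b] : List V) ++ (b :: c :: rest).tail = a :: b :: c :: rest := by simp
          rw [this, routeCpl_cons₃, routeCpl_pair]
          have hbc : N.edge b c := (List.isChain_cons_cons.mp hchσ).1
          have := turn_edge_nonneg N hab hbc
          linarith

end Aux

/-- **Lemma 5 (complexity pruning).** Let `ρ` be a route from `n_s` to `n_x`
and let `snfC⁺` be an upper bound on the complexity of a simplest near-fastest
route from `n_s` to `n_t`. If `C(ρ) + fsC[n_x] > snfC⁺`, then every extension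
`ρσ` of `ρ` towards `n_t` has complexity greater than `snfC⁺`; in particular
it is not a simplest near-fastest route. -/
theorem prune_by_complexity {V R : Type} [Fintype V] [Fintype R]
    (N : RoadNetwork V R) (ns nx nt : V) (ε : ℝ) (hε : 0 ≤ ε)
    (sfL fsC : V → ℝ) (snfC : ℝ)
    (hfsCx : IsLeast {c : ℝ | ∃ σ : List V, N.RouteFromTo σ nx nt ∧ N.routeCpl σ = c} (fsC nx))
    (hsnfC : ∃ ρ₀ : List V, NearFastest N ε sfL ρ₀ ns nt ∧ N.routeCpl ρ₀ ≤ snfC)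
    (ρ : List V) (hρ : N.RouteFromTo ρ ns nx)
    (h : N.routeCpl ρ + fsC nx > snfC) :
    ∀ σ : List V, N.RouteFromTo σ nx nt →
      N.routeCpl (ρ ++ σ.tail) > snfC ∧
      ¬ SimplestNearFastest N ε sfL (ρ ++ σ.tail) ns nt := by
  intro σ hσ
  obtain ⟨⟨hρne, hρch⟩, hρhead, hρlast⟩ := hρ
  obtain ⟨⟨hσne, hσch⟩, hσhead, hσlast⟩ := hσ
  have hfsle : fsC nx ≤ N.routeCpl σ :=
    hfsCx.2 ⟨σ, ⟨⟨hσne, hσch⟩, hσhead, hσlast⟩, rfl⟩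
  have hcat : N.routeCpl ρ + N.routeCpl σ ≤ N.routeCpl (ρ ++ σ.tail) :=
    cpl_append N ρ σ hρne hσne hρch hσch (by rw [hρlast, hσhead])
  have hgt : N.routeCpl (ρ ++ σ.tail) > snfC := by linarith
  refine ⟨hgt, fun hs => ?_⟩
  obtain ⟨ρ₀, hρ₀nf, hρ₀le⟩ := hsnfC
  have := hs.2 ρ₀ hρ₀nf
  linarith
end

section
/- Let ρ be a route from source n_s to node n_x, and suppose there exists at least one route from n_x to the target n_t. If L(ρ) + fsL[n_x] ≤ (1+ε)·sfL[n_s], then C(ρ) + 1 + fsC[n_x] is an upper bound on the complexity of a simplest near-fastest route from n_s to n_t; that is, there exists a near-fastest route from n_s to n_t whose complexity is at most C(ρ) + 1 + fsC[n_x]. -/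
namespace RoadNetwork

variable {V R : Type}

lemma routeLen_single (N : RoadNetwork V R) (a : V) : N.routeLen [a] = 0 := rfl

lemma routeLen_cons_cons (N : RoadNetwork V R) (a b : V) (l : List V) :
    N.routeLen (a :: b :: l) = N.len a b + N.routeLen (b :: l) := rfl

lemma routeCpl_single (N : RoadNetwork V R) (a : V) : N.routeCpl [a] = 0 := rfl

lemma routeCpl_pair (N : RoadNetwork V R) (a b : V) : N.routeCpl [a, b] = 0 := rfl

lemma routeCpl_cons₃ (N : RoadNetwork V R) (a b c : V) (l : List V) :
    N.routeCpl (a :: b :: c :: l) =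
      N.turn b (N.roadOf a b) (N.roadOf b c) + N.routeCpl (b :: c :: l) := rfl

lemma join_aux (N : RoadNetwork V R) :
    ∀ (ρ : List V) (nx : V) (σ' : List V),
    ρ.Chain' N.edge → ρ.getLast? = some nx → (nx :: σ').Chain' N.edge →
    ((ρ ++ σ').Chain' N.edge ∧
      N.routeLen (ρ ++ σ') = N.routeLen ρ + N.routeLen (nx :: σ') ∧
      N.routeCpl (ρ ++ σ') ≤ N.routeCpl ρ + 1 + N.routeCpl (nx :: σ')) := by
  intro ρ
  induction ρ with
  | nil => intro nx σ' _ hlast _; simp at hlast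
  | cons a tl ih =>
    intro nx σ' hchain hlast hσ
    match tl with
    | [] =>
      simp at hlast
      subst hlast
      refine ⟨by simpa using hσ, by simp [routeLen_single], ?_⟩
      simp only [List.singleton_append, routeCpl_single]
      linarith [le_refl (N.routeCpl (a :: σ'))]
    | b :: l =>
      have hlast' : (b :: l).getLast? = some nx := by
        simpa using hlast
      have hedgeab : N.edge a b := (List.isChain_cons_cons.mp hchain).1
      have hchain' : (b :: l).Chain' N.edge := (List.isChain_cons_cons.mp hchain).2
      obtain ⟨ihc, ihl, ihcp⟩ := ih nx σ' hchain' hlast' hσ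
      have hcons : (a :: b :: l) ++ σ' = a :: ((b :: l) ++ σ') := rfl
      refine ⟨?_, ?_, ?_⟩
      · rw [hcons]
        exact List.isChain_cons_cons.mpr ⟨hedgeab, ihc⟩
      · rw [hcons, List.cons_append, routeLen_cons_cons, routeLen_cons_cons]
        rw [← List.cons_append, ihl]
        ring
      · match l with
        | c :: l' =>
          have : (a :: b :: c :: l') ++ σ' = a :: b :: c :: (l' ++ σ') := rfl
          rw [this, routeCpl_cons₃, routeCpl_cons₃]
          have : b :: c :: (l' ++ σ') = (b :: c :: l') ++ σ' := rfl
          rw [this]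
          linarith
        | [] =>
          simp at hlast'
          subst hlast'
          match σ' with
          | [] =>
            simp [routeCpl_pair, routeCpl_single]
          | c :: m =>
            have : (a :: b :: []) ++ (c :: m) = a :: b :: c :: m := rfl
            rw [this, routeCpl_cons₃, routeCpl_pair]
            have hedgebc : N.edge b c := (List.isChain_cons_cons.mp hσ).1
            have hturn : N.turn b (N.roadOf a b) (N.roadOf b c) ≤ 1 :=
              N.turn_le_one b _ _ (N.edge_onRoad_right hedgeab)
                (N.edge_onRoad_left hedgebc)
            linarith

end RoadNetwork

/-- **Lemma 6 (upper bound).** Let `ρ` be a route from `n_s` to `n_x` and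
suppose some route from `n_x` to `n_t` exists. If
`L(ρ) + fsL[n_x] ≤ (1 + ε) · sfL[n_s]`, then `C(ρ) + 1 + fsC[n_x]` is an upper
bound on the complexity of a simplest near-fastest route from `n_s` to `n_t`:
there is a near-fastest route from `n_s` to `n_t` of complexity at most
`C(ρ) + 1 + fsC[n_x]`. -/
theorem complexity_upper_bound {V R : Type} [Fintype V] [Fintype R]
    (N : RoadNetwork V R) (ns nx nt : V) (ε : ℝ) (hε : 0 ≤ ε)
    (sfL fsL fsC : V → ℝ)
    (hsfLs : IsLeast {l : ℝ | ∃ σ : List V, N.RouteFromTo σ ns nt ∧ N.routeLen σ = l} (sfL ns))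
    (hfsCx : IsLeast {c : ℝ | ∃ σ : List V, N.RouteFromTo σ nx nt ∧ N.routeCpl σ = c} (fsC nx))
    (hfsLx : IsLeast {l : ℝ | ∃ σ : List V,
        N.RouteFromTo σ nx nt ∧ N.routeCpl σ = fsC nx ∧ N.routeLen σ = l} (fsL nx))
    (hex : ∃ σ : List V, N.RouteFromTo σ nx nt)
    (ρ : List V) (hρ : N.RouteFromTo ρ ns nx)
    (h : N.routeLen ρ + fsL nx ≤ (1 + ε) * sfL ns) :
    ∃ ρ' : List V, NearFastest N ε sfL ρ' ns nt ∧
      N.routeCpl ρ' ≤ N.routeCpl ρ + 1 + fsC nx := by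
  obtain ⟨⟨σ, hσroute, hσcpl, hσlen⟩, -⟩ := hfsLx
  obtain ⟨⟨hσne, hσchain⟩, hσhead, hσlast⟩ := hσroute
  obtain ⟨⟨hρne, hρchain⟩, hρhead, hρlast⟩ := hρ
  match σ, hσne with
  | x :: σ', _ =>
    have hx : x = nx := by simpa using hσhead
    subst hx
    obtain ⟨hc, hl, hcp⟩ := N.join_aux ρ x σ' hρchain hρlast hσchain
    refine ⟨ρ ++ σ', ⟨⟨⟨?_, hc⟩, ?_, ?_⟩, ?_⟩, ?_⟩
    · simp [hρne]
    · match ρ, hρne with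
      | a :: t, _ => simpa using hρhead
    · match σ' with
      | [] =>
        simp at hσlast ⊢
        subst hσlast
        simpa using hρlast
      | c :: m =>
        rw [List.getLast?_append]
        have : (c :: m).getLast? = some nt := by simpa using hσlast
        simp [this]
    · rw [hl, hσlen]
      exact h
    · rw [hσcpl] at hcp
      exact hcp
end
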